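/- arXiv:1409.4612 — 2 statements merged into one kernel-verified Lean document; each statement's English description precedes it below -/
import Mathlib

section
/- Let d ≥ 3, let e₁ = (1,0,…,0) ∈ ℝ^d, c_n = 2ⁿ e₁, and C_n = Q(c_n, 1/(2n)). For every κ > 0 there exists a constant c > 0, depending only on d and κ, such that for every integer n ≥ 2 and every y ∈ C_n one has ∫₀^∞ ∫_{C_n} n² s^{−d/2} exp(−|z − y|²/(κ s)) dz ds ≥ c. -/
/-!
Restrict the time integral to the window `n⁻² < s < 2n⁻²`. There `s^(-d/2) ≥ (2n⁻²)^(-d/2)`,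
and since any two points of `C_n` satisfy `|z - y|² ≤ d n⁻²`, also
`exp(-|z - y|²/(κs)) ≥ exp(-d/κ)`. Multiplying this bound by `n²`, by `|C_n| = n^(-d)` and by the
window length `n⁻²`, all powers of `n` cancel and `c = 2^(-d/2) exp(-d/κ)` remains.
-/

open MeasureTheory
open scoped ENNReal

noncomputable section

/-- `ℝ^d` as a Euclidean space. -/
abbrev Rd (d : ℕ) := EuclideanSpace ℝ (Fin d)

/-- The open cube `Q(c,r) = {y : max_i |c_i - y_i| < r}`. -/
def cubeSet {d : ℕ} (c : Rd d) (r : ℝ) : Set (Rd d) := {y | ∀ i, |c i - y i| < r}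

/-- The first standard basis vector `e₁ = (1,0,…,0)`. -/
def e1 (d : ℕ) [NeZero d] : Rd d := EuclideanSpace.single 0 1

/-- The center `c_n = 2^n e₁`. -/
def cn (d : ℕ) [NeZero d] (n : ℕ) : Rd d := (2 : ℝ) ^ n • e1 d

/-- The cube `C_n = Q(c_n, 1/(2n))`. -/
def Ck (d : ℕ) [NeZero d] (n : ℕ) : Set (Rd d) := cubeSet (cn d n) (1 / (2 * n))

/-- The shifted center `d_n = c_n + (τ/n) e₁`. -/
def dn (d : ℕ) [NeZero d] (τ : ℝ) (n : ℕ) : Rd d := cn d n + (τ / n) • e1 d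

/-- The shifted cube `D_n = Q(d_n, 1/(2n))`. -/
def Dn (d : ℕ) [NeZero d] (τ : ℝ) (n : ℕ) : Set (Rd d) := cubeSet (dn d τ n) (1 / (2 * n))

open Set

section Cube

variable {d : ℕ}

lemma cubeSet_eq_preimage (c : Rd d) (r : ℝ) :
    cubeSet c r = (MeasurableEquiv.toLp 2 (Fin d → ℝ)).symm ⁻¹'
      univ.pi fun i => Ioo (c i - r) (c i + r) := by
  ext y
  simp only [cubeSet, abs_sub_lt_iff, mem_preimage, mem_pi, mem_univ, forall_const, mem_Ioo,
    MeasurableEquiv.coe_toLp_symm]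
  exact forall_congr' fun i => by constructor <;> rintro ⟨h₁, h₂⟩ <;> constructor <;> linarith

lemma measurableSet_cubeSet (c : Rd d) (r : ℝ) : MeasurableSet (cubeSet c r) := by
  rw [cubeSet_eq_preimage]
  exact (MeasurableEquiv.toLp 2 _).symm.measurable (.univ_pi fun _ => measurableSet_Ioo)

lemma volume_cubeSet (c : Rd d) (r : ℝ) :
    volume (cubeSet c r) = ENNReal.ofReal (2 * r) ^ d := by
  rw [cubeSet_eq_preimage, (EuclideanSpace.volume_preserving_symm_measurableEquiv_toLp
    (Fin d)).measure_preimage (MeasurableSet.univ_pi fun _ => measurableSet_Ioo).nullMeasurableSet,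
    volume_pi_pi]
  simp only [Real.volume_Ioo, add_sub_sub_cancel, ← two_mul]
  simp

lemma abs_sub_lt_of_mem_cubeSet {c y z : Rd d} {r : ℝ} (hy : y ∈ cubeSet c r)
    (hz : z ∈ cubeSet c r) (i : Fin d) : |z i - y i| < 2 * r := by
  have := abs_sub_lt_iff.1 (hy i)
  have := abs_sub_lt_iff.1 (hz i)
  exact abs_sub_lt_iff.2 ⟨by linarith, by linarith⟩

lemma norm_sub_sq_le_of_mem_cubeSet {c y z : Rd d} {r : ℝ} (hy : y ∈ cubeSet c r)
    (hz : z ∈ cubeSet c r) : ‖z - y‖ ^ 2 ≤ d * (2 * r) ^ 2 := by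
  rw [EuclideanSpace.norm_sq_eq]
  calc ∑ i, ‖(z - y) i‖ ^ 2 ≤ ∑ _i : Fin d, (2 * r) ^ 2 := by
        gcongr with i
        exact (abs_sub_lt_of_mem_cubeSet hy hz i).le
    _ = d * (2 * r) ^ 2 := by simp

end Cube

lemma rpow_mul_exp_le_of_mem_Ioo {q κ a b s D : ℝ} (hq : q ≤ 0) (hκ : 0 < κ) (ha : 0 < a)
    (hs : s ∈ Ioo a (2 * a)) (hD₀ : 0 ≤ D) (hD : D ≤ b * a) :
    (2 * a) ^ q * Real.exp (-b / κ) ≤ s ^ q * Real.exp (-D / (κ * s)) := by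
  have hs₀ : 0 < s := ha.trans hs.1
  gcongr ?_ * ?_
  · exact Real.rpow_le_rpow_of_nonpos hs₀ hs.2.le hq
  · rw [Real.exp_le_exp, neg_div, neg_div, neg_le_neg_iff]
    calc D / (κ * s) ≤ (b * a) / (κ * a) :=
          div_le_div₀ (hD₀.trans hD) hD (by positivity) (by gcongr; exact hs.1.le)
      _ = b / κ := by field_simp

lemma mul_measure_le_lintegral_Ioi_setLIntegral {α : Type*} [MeasurableSpace α] {μ : Measure α}
    {S : Set α} (hS : MeasurableSet S) {a b : ℝ} (ha : 0 ≤ a) {K : ℝ≥0∞} {F : ℝ → α → ℝ≥0∞}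
    (hF : ∀ s ∈ Ioo a b, ∀ z ∈ S, K ≤ F s z) :
    K * μ S * ENNReal.ofReal (b - a) ≤ ∫⁻ s in Ioi 0, ∫⁻ z in S, F s z ∂μ :=
  calc K * μ S * ENNReal.ofReal (b - a)
      = ∫⁻ _ in Ioo a b, ∫⁻ _ in S, K ∂μ := by
        rw [setLIntegral_const, setLIntegral_const, Real.volume_Ioo]
    _ ≤ ∫⁻ s in Ioo a b, ∫⁻ z in S, F s z ∂μ :=
        setLIntegral_mono' measurableSet_Ioo fun s hs => setLIntegral_mono' hS (hF s hs)
    _ ≤ ∫⁻ s in Ioi 0, ∫⁻ z in S, F s z ∂μ :=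
        lintegral_mono_set fun s hs => ha.trans_lt hs.1

lemma two_div_sq_rpow_neg_half (d : ℕ) {N : ℝ} (hN : 0 ≤ N) :
    (2 / N ^ 2) ^ (-(d : ℝ) / 2) = 2 ^ (-(d : ℝ) / 2) * N ^ d := by
  rw [Real.div_rpow zero_le_two (by positivity), div_eq_mul_inv, ← Real.rpow_neg (by positivity),
    neg_div, neg_neg, ← Real.rpow_natCast_mul hN, Nat.cast_two, mul_div_cancel₀ _ two_ne_zero,
    Real.rpow_natCast]

theorem statement9_general (d : ℕ) [NeZero d] (κ : ℝ) (hκ : 0 < κ) :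
    ∃ c > (0 : ℝ), ∀ n : ℕ, 2 ≤ n → ∀ y ∈ Ck d n,
      ENNReal.ofReal c ≤
        ∫⁻ s in Set.Ioi (0 : ℝ), ∫⁻ z in Ck d n,
          ENNReal.ofReal ((n : ℝ) ^ 2 * s ^ (-(d : ℝ) / 2) *
            Real.exp (-‖z - y‖ ^ 2 / (κ * s))) := by
  refine ⟨2 ^ (-(d : ℝ) / 2) * Real.exp (-d / κ), by positivity, fun n hn y hy => ?_⟩
  have hN : (0 : ℝ) < n := by positivity
  set a : ℝ := 1 / (n : ℝ) ^ 2 with ha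
  have hnorm : ∀ z ∈ Ck d n, ‖z - y‖ ^ 2 ≤ d * a := fun z hz =>
    (norm_sub_sq_le_of_mem_cubeSet hy hz).trans_eq (by rw [ha]; field_simp)
  have hkernel : ∀ s ∈ Ioo a (2 * a), ∀ z ∈ Ck d n,
      ENNReal.ofReal (n ^ 2 * ((2 * a) ^ (-(d : ℝ) / 2) * Real.exp (-d / κ))) ≤
        ENNReal.ofReal ((n : ℝ) ^ 2 * s ^ (-(d : ℝ) / 2) * Real.exp (-‖z - y‖ ^ 2 / (κ * s))) :=
    fun s hs z hz => ENNReal.ofReal_le_ofReal <| by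
      rw [mul_assoc ((n : ℝ) ^ 2) (s ^ _)]
      have hq : -(d : ℝ) / 2 ≤ 0 := by linarith [d.cast_nonneg (α := ℝ)]
      exact mul_le_mul_of_nonneg_left (rpow_mul_exp_le_of_mem_Ioo hq hκ (by positivity) hs
        (by positivity) (hnorm z hz)) (by positivity)
  refine le_trans (le_of_eq ?_)
    (mul_measure_le_lintegral_Ioi_setLIntegral (measurableSet_cubeSet _ _) (by positivity) hkernel)
  rw [volume_cubeSet, ← ENNReal.ofReal_pow (by positivity), ← ENNReal.ofReal_mul (by positivity),
    ← ENNReal.ofReal_mul (by positivity), ha, mul_one_div, two_div_sq_rpow_neg_half d hN.le]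
  congr 1
  field_simp
  rw [← mul_pow, mul_one_div_cancel hN.ne', one_pow]
  norm_num

/-- for every `κ > 0` there is `c > 0`, depending only on `d` and `κ`, such
that for every `n ≥ 2` and `y ∈ C_n`,
`∫₀^∞ ∫_{C_n} n² s^{-d/2} exp(-|z-y|²/(κs)) dz ds ≥ c`. -/
theorem statement9 (d : ℕ) [NeZero d] (hd : 3 ≤ d) (κ : ℝ) (hκ : 0 < κ) :
    ∃ c > (0 : ℝ), ∀ n : ℕ, 2 ≤ n → ∀ y ∈ Ck d n,
      ENNReal.ofReal c ≤
        ∫⁻ s in Set.Ioi (0 : ℝ), ∫⁻ z in Ck d n,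
          ENNReal.ofReal ((n : ℝ) ^ 2 * s ^ (-(d : ℝ) / 2) *
            Real.exp (-‖z - y‖ ^ 2 / (κ * s))) :=
  statement9_general d κ hκ
end
end

section
/- Let d ≥ 1, let e₁ = (1,0,…,0) ∈ ℝ^d, c_n = 2ⁿ e₁, and C_n = Q(c_n, 1/(2n)). Let τ > 1, n ≥ 1, t > 0, and let x ∈ ℝ^d with x₁ < 2ⁿ. Then ∫_{C_n} [ exp(−|x − y|²/(4t)) − exp(−|x − y − (τ/n) e₁|²/(4t)) ] dy ≥ 0. -/
open MeasureTheory
open scoped ENNReal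

noncomputable section

/-!
The integrand is pointwise nonnegative on `C_n`. For `y ∈ C_n` the first coordinate of
`u = x - y` satisfies `2 u₁ < 1/n ≤ τ/n =: s`, hence `‖u - s e₁‖² = ‖u‖² - 2 s u₁ + s² ≥ ‖u‖²`,
and the Gaussian `exp(-r²/(4t))` is decreasing in `r²`.
-/

theorem isOpen_cubeSet {d : ℕ} (c : Rd d) (r : ℝ) : IsOpen (cubeSet c r) := by
  have h : cubeSet c r = ⋂ i, {y : Rd d | |c i - y i| < r} := by
    ext y
    simp [cubeSet]
  rw [h]
  exact isOpen_iInter_of_finite fun i => isOpen_lt (by fun_prop) continuous_const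

theorem inner_e1 {d : ℕ} [NeZero d] (u : Rd d) : inner ℝ u (e1 d) = u 0 := by
  simp [e1, EuclideanSpace.inner_single_right]

theorem norm_e1 (d : ℕ) [NeZero d] : ‖e1 d‖ = 1 := by
  simp [e1]

theorem cn_apply_zero (d : ℕ) [NeZero d] (n : ℕ) : cn d n 0 = (2 : ℝ) ^ n := by
  simp [cn, e1]

theorem sq_norm_le_sq_norm_sub_of_two_inner_le {F : Type*} [NormedAddCommGroup F]
    [InnerProductSpace ℝ F] {u v : F} (h : 2 * inner ℝ u v ≤ ‖v‖ ^ 2) :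
    ‖u‖ ^ 2 ≤ ‖u - v‖ ^ 2 := by
  rw [norm_sub_sq_real]
  linarith

theorem sq_norm_le_sq_norm_sub_smul_e1 {d : ℕ} [NeZero d] {u : Rd d} {s : ℝ} (hs : 0 ≤ s)
    (hu : 2 * u 0 ≤ s) : ‖u‖ ^ 2 ≤ ‖u - s • e1 d‖ ^ 2 := by
  apply sq_norm_le_sq_norm_sub_of_two_inner_le
  rw [real_inner_smul_right, inner_e1, norm_smul, norm_e1, Real.norm_eq_abs, mul_one, sq_abs]
  nlinarith

theorem two_mul_sub_apply_zero_lt_of_mem_Ck {d : ℕ} [NeZero d] {n : ℕ} {x y : Rd d}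
    (hx : x 0 < (2 : ℝ) ^ n) (hy : y ∈ Ck d n) : 2 * (x - y) 0 < 1 / n := by
  have hy0 := (abs_lt.mp (hy 0)).2
  rw [cn_apply_zero] at hy0
  have h : (1 : ℝ) / n = 2 * (1 / (2 * n)) := by
    rw [mul_one_div, ← mul_div_mul_left 1 (n : ℝ) two_ne_zero, mul_one]
  rw [PiLp.sub_apply, h]
  linarith

theorem gaussian_antitone {t : ℝ} (ht : 0 < t) {a b : ℝ} (hab : a ≤ b) :
    Real.exp (-b / (4 * t)) ≤ Real.exp (-a / (4 * t)) :=
  Real.exp_le_exp.mpr (div_le_div_of_nonneg_right (neg_le_neg hab) (by positivity))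

theorem statement13_general (d : ℕ) [NeZero d] (τ : ℝ) (hτ : 1 < τ)
    (n : ℕ) (t : ℝ) (ht : 0 < t) (x : Rd d) (hx : x 0 < (2 : ℝ) ^ n) :
    0 ≤ ∫ y in Ck d n,
      (Real.exp (-‖x - y‖ ^ 2 / (4 * t)) -
        Real.exp (-‖x - y - (τ / n) • e1 d‖ ^ 2 / (4 * t))) := by
  refine setIntegral_nonneg (isOpen_cubeSet _ _).measurableSet fun y hy => sub_nonneg.mpr ?_
  have hshift : 1 / (n : ℝ) ≤ τ / n := by gcongr
  have hs : 0 ≤ τ / (n : ℝ) := by positivity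
  exact gaussian_antitone ht <| sq_norm_le_sq_norm_sub_smul_e1 hs <|
    (two_mul_sub_apply_zero_lt_of_mem_Ck hx hy).le.trans hshift

/-- for `d ≥ 1`, `τ > 1`, `n ≥ 1`, `t > 0` and `x` with `x₁ < 2ⁿ`,
`∫_{C_n} [exp(-|x-y|²/(4t)) - exp(-|x-y-(τ/n)e₁|²/(4t))] dy ≥ 0`. -/
theorem statement13 (d : ℕ) [NeZero d] (hd : 1 ≤ d) (τ : ℝ) (hτ : 1 < τ)
    (n : ℕ) (hn : 1 ≤ n) (t : ℝ) (ht : 0 < t) (x : Rd d) (hx : x 0 < (2 : ℝ) ^ n) :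
    0 ≤ ∫ y in Ck d n,
      (Real.exp (-‖x - y‖ ^ 2 / (4 * t)) -
        Real.exp (-‖x - y - (τ / n) • e1 d‖ ^ 2 / (4 * t))) :=
  statement13_general d τ hτ n t ht x hx
end
end
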